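/- Let R be a Noetherian unique factorization domain, let f : M → N be an injective R-linear map between finitely generated free R-modules, and let ξ ∈ N. Then the ideal I(ξ) = {a ∈ R : a·ξ ∈ range(f)} of R is a principal ideal. -/

import Mathlib

/-!
Pick `r ≠ 0` in `I` and `m₀` with `f m₀ = r • ξ`. As `f` is injective and `N` torsion-free,
`a ∈ I` iff `a • m₀ ∈ r • M`, i.e. iff `r` divides `a` times every coordinate of `m₀`, i.e.
iff `r ∣ a * c` for the gcd `c` of these coordinates. Hence `I` is the ideal quotient
`(r) : (c)`, which in a GCD domain is generated by `r / gcd r c`.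
-/

theorem Ideal.isPrincipal_colon_span_singleton {R : Type*} [CommRing R] [IsDomain R] [GCDMonoid R]
    {b : R} (hb : b ≠ 0) (c : R) : ((Ideal.span {b}).colon (Ideal.span {c})).IsPrincipal := by
  obtain ⟨b', c', hb', hc', hcop⟩ := extract_gcd b c
  have hg : gcd b c ≠ 0 := fun h ↦ hb (by rw [hb', h, zero_mul])
  refine ⟨b', ?_⟩
  ext a
  rw [Ideal.mem_colon_span_singleton, Ideal.submodule_span_eq, Ideal.mem_span_singleton,
    Ideal.mem_span_singleton]
  calc b ∣ a * c ↔ gcd b c * b' ∣ gcd b c * (a * c') := by rw [← hb', mul_left_comm, ← hc']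
    _ ↔ b' ∣ a * c' := mul_dvd_mul_iff_left hg
    _ ↔ b' ∣ a := ⟨(gcd_isUnit_iff_isRelPrime.mp hcop).dvd_of_dvd_mul_right,
      fun h ↦ h.mul_right c'⟩

theorem Module.Basis.exists_smul_eq_iff_forall_dvd_repr {R M ι : Type*} [CommSemiring R]
    [AddCommMonoid M] [Module R M] [Fintype ι] (b : Module.Basis ι R M) (r : R) (x : M) :
    (∃ m, r • m = x) ↔ ∀ i, r ∣ b.repr x i := by
  constructor
  · rintro ⟨m, rfl⟩ i
    exact ⟨b.repr m i, by simp⟩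
  · intro h
    choose e he using h
    refine ⟨b.equivFun.symm e, b.equivFun.injective ?_⟩
    rw [map_smul, LinearEquiv.apply_symm_apply]
    ext i
    simp [he]

theorem dvd_mul_finset_gcd_iff {α β : Type*} [CommMonoidWithZero α] [NormalizedGCDMonoid α]
    {s : Finset β} {f : β → α} {a b : α} : b ∣ a * s.gcd f ↔ ∀ i ∈ s, b ∣ a * f i := by
  rw [← (Finset.gcd_mul_left' s f a).dvd_iff_dvd_right, Finset.dvd_gcd_iff]

theorem LinearMap.smul_mem_range_iff_exists_smul_eq {R M N : Type*} [CommRing R] [IsDomain R]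
    [AddCommGroup M] [Module R M] [AddCommGroup N] [Module R N] [Module.IsTorsionFree R N]
    {f : M →ₗ[R] N} (hf : Function.Injective f) {r : R} (hr : r ≠ 0) {m₀ : M} {ξ : N}
    (hm₀ : f m₀ = r • ξ) (a : R) : a • ξ ∈ LinearMap.range f ↔ ∃ m, r • m = a • m₀ := by
  constructor
  · rintro ⟨m, hm⟩
    exact ⟨m, hf (by rw [map_smul, map_smul, hm, hm₀, smul_comm])⟩
  · rintro ⟨m, hm⟩
    refine ⟨m, smul_right_injective N hr ?_⟩
    change r • f m = r • a • ξ
    rw [← map_smul, hm, map_smul, hm₀, smul_comm]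

theorem annihilator_ideal_isPrincipal_general
    {R M N : Type*} [CommRing R] [IsDomain R]
    [UniqueFactorizationMonoid R]
    [AddCommGroup M] [Module R M] [Module.Free R M] [Module.Finite R M]
    [AddCommGroup N] [Module R N] [Module.Free R N]
    (f : M →ₗ[R] N) (hf : Function.Injective f) (ξ : N) :
    (Submodule.comap (LinearMap.toSpanSingleton R N ξ) (LinearMap.range f)).IsPrincipal := by
  obtain ⟨_⟩ : Nonempty (NormalizedGCDMonoid R) := inferInstance
  set I := Submodule.comap (LinearMap.toSpanSingleton R N ξ) (LinearMap.range f)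
  by_cases hI : I = ⊥
  · rw [hI]
    exact bot_isPrincipal
  obtain ⟨r, ⟨m₀, hm₀⟩, hr⟩ := (Submodule.ne_bot_iff I).mp hI
  let b := Module.Free.chooseBasis R M
  have hI_eq : I = (Ideal.span {r}).colon (Ideal.span {Finset.univ.gcd (b.repr m₀)}) := by
    ext a
    rw [Ideal.mem_colon_span_singleton, Ideal.mem_span_singleton, dvd_mul_finset_gcd_iff]
    change a • ξ ∈ LinearMap.range f ↔ _
    simp [LinearMap.smul_mem_range_iff_exists_smul_eq hf hr hm₀,
      b.exists_smul_eq_iff_forall_dvd_repr]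
  rw [hI_eq]
  exact Ideal.isPrincipal_colon_span_singleton hr _

/-- Let `R` be a Noetherian UFD, `f : M → N` an injective
`R`-linear map between finitely generated free `R`-modules, and `ξ ∈ N`.
Then the ideal `I(ξ) = {a ∈ R : a • ξ ∈ range f}` of `R` is principal.
(Here `I(ξ)` is realized as the preimage of `range f` under the linear map
`R → N`, `a ↦ a • ξ`.) -/
theorem annihilator_ideal_isPrincipal
    {R M N : Type*} [CommRing R] [IsDomain R] [IsNoetherianRing R]
    [UniqueFactorizationMonoid R]
    [AddCommGroup M] [Module R M] [Module.Free R M] [Module.Finite R M]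
    [AddCommGroup N] [Module R N] [Module.Free R N] [Module.Finite R N]
    (f : M →ₗ[R] N) (hf : Function.Injective f) (ξ : N) :
    (Submodule.comap (LinearMap.toSpanSingleton R N ξ) (LinearMap.range f)).IsPrincipal :=
  annihilator_ideal_isPrincipal_general f hf ξ
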